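/- arXiv:2512.07227 — 3 statements merged into one kernel-verified Lean document; each statement's English description precedes it below -/
import Mathlib

section
/- Let F be a free ultrafilter on ℕ and V = {x ∈ l_p(ℕ) : {n : x n = 0} ∈ F}. Then V has infinite codimension in l_p(ℕ); more precisely, the sequences x^α = (2^{n α}) for α < 0 are linearly independent modulo V (no nontrivial finite linear combination lies in V), so the codimension is at least the cardinality of the continuum. -/
/-!
A combination `∑ cᵢ rᵢⁿ` of geometric sequences with distinct positive ratios and some `cᵢ ≠ 0`
vanishes for only finitely many `n`: divided by the `n`-th power of the largest ratio carrying a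
nonzero coefficient, it tends to that coefficient. A free ultrafilter contains no finite set, so no
such combination lies in `V`. This covers the sequences `2^{nα} = (2^α)ⁿ`, and the geometric
sequences `(rⁿ)` with `0 < r < 1` are continuum many elements of `ℓ^p` independent modulo `V`.
-/

open Filter Topology
open scoped ENNReal Cardinal

theorem finite_setOf_sum_mul_pow_eq_zero {ι : Type*} (s : Finset ι) {r : ι → ℝ}
    (hr : ∀ i ∈ s, 0 < r i) (hinj : Set.InjOn r s) {c : ι → ℝ} (hc : ∃ i ∈ s, c i ≠ 0) :
    {n : ℕ | ∑ i ∈ s, c i * r i ^ n = 0}.Finite := by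
  classical
  obtain ⟨i₀, hi₀, hmax⟩ := (s.filter fun i => c i ≠ 0).exists_max_image r
    (by simpa only [Finset.filter_nonempty_iff] using hc)
  obtain ⟨hi₀s, hci₀⟩ := Finset.mem_filter.mp hi₀
  have hr₀ := hr i₀ hi₀s
  have hdecay : ∀ i ∈ s.erase i₀, Tendsto (fun n : ℕ => c i * (r i / r i₀) ^ n) atTop (𝓝 0) := by
    intro i hi
    obtain ⟨hne, his⟩ := Finset.mem_erase.mp hi
    by_cases hci : c i = 0
    · simp [hci]
    have hlt : r i < r i₀ :=
      (hmax i (Finset.mem_filter.mpr ⟨his, hci⟩)).lt_of_ne fun h => hne (hinj his hi₀s h)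
    simpa using (tendsto_pow_atTop_nhds_zero_of_lt_one (div_nonneg (hr i his).le hr₀.le)
      ((div_lt_one hr₀).mpr hlt)).const_mul (c i)
  have hlim : Tendsto (fun n : ℕ => ∑ i ∈ s, c i * (r i / r i₀) ^ n) atTop (𝓝 (c i₀)) := by
    have := (tendsto_finsetSum _ hdecay).const_add (c i₀)
    rw [Finset.sum_const_zero, add_zero] at this
    refine this.congr fun n => ?_
    rw [← Finset.add_sum_erase s _ hi₀s, div_self hr₀.ne', one_pow, mul_one]
  have hev : ∀ᶠ n in atTop, ∑ i ∈ s, c i * r i ^ n ≠ 0 := by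
    filter_upwards [hlim.eventually_ne hci₀] with n hn
    have hfactor : ∑ i ∈ s, c i * r i ^ n = r i₀ ^ n * ∑ i ∈ s, c i * (r i / r i₀) ^ n := by
      rw [Finset.mul_sum]
      refine Finset.sum_congr rfl fun i _ => ?_
      rw [div_pow, mul_left_comm, mul_div_cancel₀ _ (pow_ne_zero _ hr₀.ne')]
    rw [hfactor]
    exact mul_ne_zero (pow_ne_zero _ hr₀.ne') hn
  simpa only [← Nat.cofinite_eq_atTop, eventually_cofinite, not_not] using hev

theorem memℓp_geometric {r : ℝ} (hr : ‖r‖ < 1) {p : ℝ≥0∞} (hp : 0 < p) :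
    Memℓp (fun n : ℕ => r ^ n) p := by
  rcases eq_or_ne p ∞ with rfl | hp'
  · refine memℓp_infty ⟨1, ?_⟩
    rintro _ ⟨n, rfl⟩
    simpa only [norm_pow] using pow_le_one₀ (norm_nonneg r) hr.le
  · have ht : 0 < p.toReal := ENNReal.toReal_pos hp.ne' hp'
    refine memℓp_gen ((summable_geometric_of_lt_one (by positivity)
      (Real.rpow_lt_one (norm_nonneg r) hr ht)).congr fun n => ?_)
    rw [norm_pow, Real.rpow_pow_comm (norm_nonneg r)]

def lp.eventuallyZero (𝕜 : Type*) [NormedRing 𝕜] {ι : Type*} (E : ι → Type*)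
    [∀ i, NormedAddCommGroup (E i)] [∀ i, Module 𝕜 (E i)] [∀ i, IsBoundedSMul 𝕜 (E i)]
    (p : ℝ≥0∞) (l : Filter ι) : Submodule 𝕜 (lp E p) where
  carrier := {x | ∀ᶠ i in l, x i = 0}
  add_mem' ha hb := by
    filter_upwards [ha, hb] with i hai hbi
    simp [hai, hbi]
  zero_mem' := by simp
  smul_mem' c x hx := by
    filter_upwards [hx] with i hi
    simp [hi]

@[simp]
theorem lp.mem_eventuallyZero {𝕜 : Type*} [NormedRing 𝕜] {ι : Type*} {E : ι → Type*}
    [∀ i, NormedAddCommGroup (E i)] [∀ i, Module 𝕜 (E i)] [∀ i, IsBoundedSMul 𝕜 (E i)]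
    {p : ℝ≥0∞} {l : Filter ι} {x : lp E p} :
    x ∈ lp.eventuallyZero 𝕜 E p l ↔ ∀ᶠ i in l, x i = 0 :=
  Iff.rfl

theorem linearIndependent_mkQ_geometric {p : ℝ≥0∞} (hp : 0 < p) {l : Filter ℕ}
    (hl : ∀ s : Set ℕ, s.Finite → s ∉ l) :
    LinearIndependent ℝ fun r : Set.Ioo (0 : ℝ) 1 =>
      (lp.eventuallyZero ℝ (fun _ : ℕ => ℝ) p l).mkQ (⟨fun n => (r : ℝ) ^ n,
        memℓp_geometric (by rw [Real.norm_of_nonneg r.2.1.le]; exact r.2.2) hp⟩ :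
          lp (fun _ : ℕ => ℝ) p) := by
  rw [linearIndependent_iff']
  intro s g hg i hi
  by_contra hgi
  simp_rw [← map_smul, ← map_sum, Submodule.mkQ_apply, Submodule.Quotient.mk_eq_zero] at hg
  refine hl _ (finite_setOf_sum_mul_pow_eq_zero s (fun r _ => r.2.1) Subtype.val_injective.injOn
    ⟨i, hi, hgi⟩) ?_
  rw [lp.mem_eventuallyZero] at hg
  refine mem_of_superset hg fun n hn => ?_
  simpa only [lp.coeFn_sum, Finset.sum_apply, lp.coeFn_smul, Pi.smul_apply, smul_eq_mul] using hn

theorem stmt_5 (p : ENNReal) [Fact (1 ≤ p)] (F : Ultrafilter ℕ)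
    (hF : ∀ s : Set ℕ, s.Finite → s ∉ F) :
    (∀ (k : ℕ) (α : Fin k → ℝ), Function.Injective α → (∀ j, α j < 0) →
      ∀ c : Fin k → ℝ, c ≠ 0 →
        ∀ x : lp (fun _ : ℕ => ℝ) p,
          (x : ℕ → ℝ) = (fun n : ℕ => ∑ j, c j * (2 : ℝ) ^ ((n : ℝ) * α j)) →
          {n : ℕ | (x : ℕ → ℝ) n = 0} ∉ F) ∧
    ∃ W : Submodule ℝ (lp (fun _ : ℕ => ℝ) p),
      (W : Set (lp (fun _ : ℕ => ℝ) p)) =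
        {x : lp (fun _ : ℕ => ℝ) p | {n : ℕ | (x : ℕ → ℝ) n = 0} ∈ F} ∧
      Cardinal.continuum ≤ Module.rank ℝ (lp (fun _ : ℕ => ℝ) p ⧸ W) := by
  refine ⟨fun k α hinj _ c hc x hx => hF _ ?_, lp.eventuallyZero ℝ _ p F, rfl, ?_⟩
  · have hpow : ∀ (n : ℕ) (a : ℝ), (2 : ℝ) ^ ((n : ℝ) * a) = ((2 : ℝ) ^ a) ^ n := fun n a => by
      rw [mul_comm, Real.rpow_mul_natCast zero_le_two]
    have hfin := finite_setOf_sum_mul_pow_eq_zero Finset.univ (r := fun j => (2 : ℝ) ^ α j)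
      (fun j _ => Real.rpow_pos_of_pos two_pos _)
      (fun i _ j _ h => hinj ((Real.strictMono_rpow_of_base_gt_one one_lt_two).injective h))
      (by simpa [Function.ne_iff] using hc)
    rw [hx]
    simpa only [hpow] using hfin
  · calc 𝔠 = #(Set.Ioo (0 : ℝ) 1) := (Cardinal.mk_Ioo_real zero_lt_one).symm
      _ ≤ _ := (linearIndependent_mkQ_geometric (zero_lt_one.trans_le Fact.out) hF).cardinal_le_rank
end

section
/- For 1 ≤ p ≤ ∞ there exists an unbounded (discontinuous) linear functional h on l_p(ℕ) such that for every family (a_i)_{i∈I} of elements with pairwise disjoint supports, at most one a_i lies outside ker h. -/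
/-!
Fix a free ultrafilter `U` on `ℕ` and send a sequence to its germ along `U`. If `a` and `b` have
disjoint supports then, pointwise, `a n = 0` or `b n = 0`, so one of the two germs vanishes; hence
every functional that factors through the germ map satisfies the disjointness condition. The germs
of the sequences `n ↦ 2^{-n(k+1)}`, which all lie in the ball of radius `‖(2^{-n})‖_p`, are
linearly independent, because a nonzero polynomial vanishes at only finitely many of the distinct
points `2^{-n}`. A functional taking the value `k` on the `k`-th germ is therefore unbounded.
-/

open Filter Function Polynomial

theorem LinearIndependent.exists_linearMap_apply_eq {K V V' ι : Type*} [Field K]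
    [AddCommGroup V] [Module K V] [AddCommGroup V'] [Module K V'] {v : ι → V}
    (hv : LinearIndependent K v) (f : ι → V') : ∃ g : V →ₗ[K] V', ∀ i, g (v i) = f i := by
  obtain ⟨g, hg⟩ := ((Module.Basis.span hv).constr K f).exists_extend
  refine ⟨g, fun i => ?_⟩
  have := congr($hg (Module.Basis.span hv i))
  rwa [LinearMap.comp_apply, Module.Basis.constr_basis, Submodule.subtype_apply,
    Module.Basis.span_apply] at this

namespace Filter.Germ

variable {α : Type*}

def coeLinearMap (R M : Type*) [Semiring R] [AddCommMonoid M] [Module R M] (l : Filter α) :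
    (α → M) →ₗ[R] Germ l M where
  toFun := (↑)
  map_add' _ _ := rfl
  map_smul' _ _ := rfl

theorem coe_eq_zero_or_of_disjoint_support {M : Type*} [Zero M] {U : Ultrafilter α}
    {a b : α → M} (h : Disjoint (support a) (support b)) :
    (a : Germ (U : Filter α) M) = 0 ∨ (b : Germ (U : Filter α) M) = 0 := by
  simp only [← coe_zero, coe_eq]
  refine Ultrafilter.eventually_or.1 (Eventually.of_forall fun n => ?_)
  by_contra! hn
  exact Set.disjoint_left.1 h hn.1 hn.2

theorem linearIndependent_coe_mul_pow {K : Type*} [Field K] {l : Filter α} [NeBot l]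
    (hl : l ≤ cofinite) {w t : α → K} (hw : ∀ᶠ n in l, w n ≠ 0) (ht : Injective t) :
    LinearIndependent K (fun k : ℕ => ((w * t ^ k : α → K) : Germ l K)) := by
  let Φ : K[X] →ₗ[K] Germ l K := coeLinearMap K K l ∘ₗ LinearMap.pi fun n => w n • leval (t n)
  have hΦ : LinearMap.ker Φ = ⊥ := by
    refine LinearMap.ker_eq_bot'.2 fun P hP => ?_
    by_contra hP0
    have hroots : ∀ᶠ n in l, P.IsRoot (t n) := by
      have : ∀ᶠ n in l, w n * P.eval (t n) = 0 := coe_eq.1 hP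
      filter_upwards [this, hw] with n hn hwn
      exact (mul_eq_zero.1 hn).resolve_left hwn
    have hnonroots : ∀ᶠ n in l, ¬P.IsRoot (t n) :=
      hl ((P.finite_setOfPred_isRoot hP0).preimage ht.injOn).compl_mem_cofinite
    obtain ⟨n, hn, hnroot⟩ := (hroots.and hnonroots).exists
    exact hnroot hn
  have hΦX : (fun k : ℕ => ((w * t ^ k : α → K) : Germ l K)) = Φ ∘ basisMonomials K := by
    funext k
    refine congrArg ofFun (funext fun n => ?_)
    simp
  rw [hΦX]
  exact (basisMonomials K).linearIndependent.map' Φ hΦ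

end Filter.Germ

theorem LinearMap.not_continuous_of_norm_le_of_apply_eq_natCast {E : Type*}
    [SeminormedAddCommGroup E] [NormedSpace ℝ E] (f : E →ₗ[ℝ] ℝ) {x : ℕ → E} {C : ℝ}
    (hx : ∀ k, ‖x k‖ ≤ C) (hf : ∀ k, f (x k) = k) : ¬Continuous f := by
  intro hc
  let F : E →L[ℝ] ℝ := ⟨f, hc⟩
  obtain ⟨k, hk⟩ := exists_nat_gt (‖F‖ * C)
  have : (k : ℝ) ≤ ‖F‖ * C := calc
    (k : ℝ) = ‖F (x k)‖ := by simp [F, hf]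
    _ ≤ ‖F‖ * ‖x k‖ := F.le_opNorm _
    _ ≤ ‖F‖ * C := by gcongr; exact hx k
  linarith

namespace lp

def coeFnLinearMap {α 𝕜 : Type*} {E : α → Type*} [∀ i, NormedAddCommGroup (E i)]
    {p : ENNReal} [NormedRing 𝕜] [∀ i, Module 𝕜 (E i)] [∀ i, IsBoundedSMul 𝕜 (E i)] :
    lp E p →ₗ[𝕜] ∀ i, E i where
  toFun := (↑)
  map_add' _ _ := rfl
  map_smul' _ _ := rfl

theorem exists_norm_le_linearIndependent_germ (p : ENNReal) [Fact (1 ≤ p)] {l : Filter ℕ}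
    [NeBot l] (hl : l ≤ cofinite) :
    ∃ (x : ℕ → lp (fun _ : ℕ => ℝ) p) (C : ℝ),
      (∀ k, ‖x k‖ ≤ C) ∧ LinearIndependent ℝ (fun k => ((x k : ℕ → ℝ) : Germ l ℝ)) := by
  let t : ℕ → ℝ := fun n => (1 / 2) ^ n
  have ht : Memℓp t p :=
    (memℓp_gen (p := 1) (by simpa [t] using summable_geometric_two)).of_exponent_ge Fact.out
  have hle (k n : ℕ) : ‖(t ^ (k + 1)) n‖ ≤ ‖t n‖ := by
    rw [Pi.pow_apply, norm_pow]
    exact pow_le_of_le_one (norm_nonneg _)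
      (by rw [norm_pow]; exact pow_le_one₀ (norm_nonneg _) (by norm_num)) k.succ_ne_zero
  refine ⟨fun k => ⟨t ^ (k + 1), ht.mono' (hle k)⟩, ‖(⟨t, ht⟩ : lp (fun _ : ℕ => ℝ) p)‖,
    fun k => norm_mono (zero_lt_one.trans_le Fact.out).ne' (hle k), ?_⟩
  simpa only [pow_succ'] using Germ.linearIndependent_coe_mul_pow hl
    (.of_forall fun n => by positivity) (pow_right_injective₀ (by norm_num) (by norm_num))

end lp

theorem stmt_8 (p : ENNReal) [Fact (1 ≤ p)] :
    ∃ h : lp (fun _ : ℕ => ℝ) p →ₗ[ℝ] ℝ,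
      ¬Continuous h ∧
      ∀ (I : Type) (a : I → lp (fun _ : ℕ => ℝ) p),
        (∀ i j : I, i ≠ j →
          {n : ℕ | (a i : ℕ → ℝ) n ≠ 0} ∩ {n : ℕ | (a j : ℕ → ℝ) n ≠ 0} = ∅) →
        ∀ i j : I, h (a i) ≠ 0 → h (a j) ≠ 0 → i = j := by
  let germ : lp (fun _ : ℕ => ℝ) p →ₗ[ℝ] Germ (hyperfilter ℕ : Filter ℕ) ℝ :=
    Germ.coeLinearMap ℝ ℝ _ ∘ₗ lp.coeFnLinearMap
  obtain ⟨x, C, hxC, hx⟩ := lp.exists_norm_le_linearIndependent_germ p hyperfilter_le_cofinite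
  obtain ⟨g, hg⟩ := hx.exists_linearMap_apply_eq fun k => (k : ℝ)
  refine ⟨g ∘ₗ germ, (g ∘ₗ germ).not_continuous_of_norm_le_of_apply_eq_natCast hxC hg, ?_⟩
  intro I a hdisj i j hi hj
  by_contra hij
  rcases Germ.coe_eq_zero_or_of_disjoint_support
    (Set.disjoint_iff_inter_eq_empty.2 (hdisj i j hij)) with h0 | h0
  · exact hi ((congrArg g h0).trans g.map_zero)
  · exact hj ((congrArg g h0).trans g.map_zero)
end

section
/- For 1 ≤ p ≤ ∞ there exists a proper linear subspace V of l_p(ℕ) of codimension at least 2 (indeed infinite) such that for any two elements a, b of l_p(ℕ) with disjoint supports, a ∈ V or b ∈ V. -/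
/-!
Fix a free ultrafilter `U` on `ℕ` and let `V` consist of the sequences vanishing on a set of `U`.
Since `U` is an ultrafilter, for disjointly supported `a, b` one of the zero sets of `a`, `b` lies
in `U`. The sequences `n ↦ P(n) 2⁻ⁿ`, for polynomials `P ≠ 0`, lie in every `ℓ_p` and vanish only
finitely often, hence outside `V`; so `ℝ[X]` embeds into `ℓ_p / V`, which therefore has infinite
dimension.
-/

open Filter Polynomial

noncomputable section

theorem Polynomial.finite_setOf_eval_natCast_mul_pow_eq_zero {R : Type*} [CommRing R] [IsDomain R]
    [CharZero R] {P : R[X]} (hP : P ≠ 0) {r : R} (hr : r ≠ 0) :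
    {n : ℕ | P.eval (n : R) * r ^ n = 0}.Finite := by
  refine ((finite_setOfPred_isRoot hP).preimage Nat.cast_injective.injOn).subset fun n hn => ?_
  simpa [hr] using hn

namespace lp

section EventuallyZero

variable (𝕜 : Type*) {ι : Type*} {E : ι → Type*} {p : ENNReal} [NormedRing 𝕜]
  [∀ i, NormedAddCommGroup (E i)] [∀ i, Module 𝕜 (E i)] [∀ i, IsBoundedSMul 𝕜 (E i)]

def eventuallyZero_s16 (l : Filter ι) : Submodule 𝕜 (lp E p) where
  carrier := {x | ∀ᶠ i in l, x i = 0}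
  add_mem' ha hb := by
    filter_upwards [ha, hb] with i ha hb
    simp [ha, hb]
  zero_mem' := by simp
  smul_mem' c x hx := by
    filter_upwards [hx] with i hx
    simp [hx]

variable {𝕜}

theorem mem_eventuallyZero_s16 {l : Filter ι} {x : lp E p} :
    x ∈ eventuallyZero_s16 𝕜 l ↔ ∀ᶠ i in l, x i = 0 :=
  Iff.rfl

theorem mem_or_mem_eventuallyZero_of_disjoint (U : Ultrafilter ι) {a b : lp E p}
    (hab : ∀ i, a i = 0 ∨ b i = 0) :
    a ∈ eventuallyZero_s16 𝕜 (U : Filter ι) ∨ b ∈ eventuallyZero_s16 𝕜 (U : Filter ι) :=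
  Ultrafilter.eventually_or.mp (Eventually.of_forall hab)

end EventuallyZero

section PolyMulGeometric

variable (p : ENNReal) [Fact (1 ≤ p)] {r : ℝ}

theorem memℓp_pow_mul_geometric (i : ℕ) (hr : |r| < 1) :
    Memℓp (fun n : ℕ => (n : ℝ) ^ i * r ^ n) p := by
  refine Memℓp.of_exponent_ge (memℓp_gen ?_) (Fact.out : 1 ≤ p)
  simpa using (summable_pow_mul_geometric_of_norm_lt_one i (r := |r|) (by simpa using hr))

theorem memℓp_eval_mul_geometric (P : ℝ[X]) (hr : |r| < 1) :
    Memℓp (fun n : ℕ => P.eval (n : ℝ) * r ^ n) p := by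
  convert Memℓp.finsetSum (Finset.range (P.natDegree + 1))
    fun i _ => (memℓp_pow_mul_geometric p i hr).const_smul (P.coeff i) using 2 with n
  simp [eval_eq_sum_range, Finset.sum_mul, mul_assoc]

def polyMulGeometric (hr : |r| < 1) : ℝ[X] →ₗ[ℝ] lp (fun _ : ℕ => ℝ) p where
  toFun P := ⟨_, memℓp_eval_mul_geometric p P hr⟩
  map_add' P Q := lp.ext <| funext fun n => by simp [add_mul]; rfl
  map_smul' c P := lp.ext <| funext fun n => by simp [mul_assoc]

theorem ker_mkQ_comp_polyMulGeometric {l : Filter ℕ} [l.NeBot] (hl : l ≤ cofinite)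
    (hr0 : r ≠ 0) (hr : |r| < 1) :
    LinearMap.ker ((eventuallyZero_s16 ℝ l).mkQ ∘ₗ polyMulGeometric p hr) = ⊥ := by
  refine LinearMap.ker_eq_bot'.mpr fun P hP => ?_
  by_contra hP0
  have hzero : ∀ᶠ n : ℕ in l, P.eval (n : ℝ) * r ^ n = 0 := by
    rwa [LinearMap.comp_apply, Submodule.mkQ_apply, Submodule.Quotient.mk_eq_zero,
      mem_eventuallyZero_s16] at hP
  have hnonzero : ∀ᶠ n : ℕ in l, ¬ P.eval (n : ℝ) * r ^ n = 0 :=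
    hl (finite_setOf_eval_natCast_mul_pow_eq_zero hP0 hr0).eventually_cofinite_notMem
  obtain ⟨n, hn, hn'⟩ := (hzero.and hnonzero).exists
  exact hn' hn

end PolyMulGeometric

end lp

theorem stmt_16 (p : ENNReal) [Fact (1 ≤ p)] :
    ∃ W : Submodule ℝ (lp (fun _ : ℕ => ℝ) p),
      W ≠ ⊤ ∧
      2 ≤ Module.rank ℝ (lp (fun _ : ℕ => ℝ) p ⧸ W) ∧
      Cardinal.aleph0 ≤ Module.rank ℝ (lp (fun _ : ℕ => ℝ) p ⧸ W) ∧
      ∀ a b : lp (fun _ : ℕ => ℝ) p,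
        (∀ n : ℕ, (a : ℕ → ℝ) n = 0 ∨ (b : ℕ → ℝ) n = 0) →
        a ∈ W ∨ b ∈ W := by
  let U := hyperfilter ℕ
  let W : Submodule ℝ (lp (fun _ : ℕ => ℝ) p) := lp.eventuallyZero_s16 ℝ (U : Filter ℕ)
  have hr : |(2⁻¹ : ℝ)| < 1 := by norm_num [abs_of_pos]
  have hker := lp.ker_mkQ_comp_polyMulGeometric p hyperfilter_le_cofinite (by norm_num) hr
  have hrank : Cardinal.aleph0 ≤ Module.rank ℝ (lp (fun _ : ℕ => ℝ) p ⧸ W) :=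
    ((basisMonomials ℝ).linearIndependent.map' _ hker).aleph0_le_rank
  refine ⟨W, ?_, Cardinal.ofNat_le_aleph0.trans hrank, hrank,
    fun a b hab => lp.mem_or_mem_eventuallyZero_of_disjoint U hab⟩
  rintro hW
  rw [hW, rank_subsingleton'] at hrank
  exact Cardinal.aleph0_pos.not_ge hrank
end
end
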